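/- The group of ℤ-linear automorphisms of the lattice L_BZ that map the set of BZ triangles onto itself has exactly 72 elements, and it is isomorphic to the direct product S₃ × S₃ × S₂ of symmetric groups. -/

import Mathlib

/-- The lattice `L_BZ` of integer labellings `(y₁,y₂,y₃,z₁,…,z₆)` (indexed `0,…,8`)
with `z₁−z₄ = z₅−z₂ = z₃−z₆`, as a ℤ-submodule of `ℤ⁹`. -/
def Lbz : Submodule ℤ (Fin 9 → ℤ) where
  carrier := {T | T 3 - T 6 = T 7 - T 4 ∧ T 7 - T 4 = T 5 - T 8}
  add_mem' := by
    rintro a b ⟨ha1, ha2⟩ ⟨hb1, hb2⟩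
    refine ⟨?_, ?_⟩ <;> simp only [Pi.add_apply] <;> omega
  zero_mem' := by refine ⟨?_, ?_⟩ <;> simp
  smul_mem' := by
    rintro m a ⟨h1, h2⟩
    refine ⟨?_, ?_⟩ <;> simp only [Pi.smul_apply, smul_eq_mul]
    · linear_combination m * h1
    · linear_combination m * h2

/-- The set of BZ triangles: the elements of `L_BZ` with nonnegative coordinates. -/
def BZset : Set Lbz := {v | ∀ i, 0 ≤ (v : Fin 9 → ℤ) i}

/-- The group of ℤ-linear automorphisms of `L_BZ` mapping the set of BZ triangles
onto itself. -/
def GBZ : Subgroup (Lbz ≃ₗ[ℤ] Lbz) where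
  carrier := {θ | ⇑θ '' BZset = BZset}
  one_mem' := by
    show ⇑(1 : Lbz ≃ₗ[ℤ] Lbz) '' BZset = BZset
    rw [show ⇑(1 : Lbz ≃ₗ[ℤ] Lbz) = id from rfl, Set.image_id]
  mul_mem' := by
    intro a b ha hb
    show ⇑(a * b) '' BZset = BZset
    rw [show ⇑(a * b) = ⇑a ∘ ⇑b from rfl, Set.image_comp]
    rw [show ⇑b '' BZset = BZset from hb, show ⇑a '' BZset = BZset from ha]
  inv_mem' := by
    intro a ha
    show ⇑a⁻¹ '' BZset = BZset
    conv_lhs => rw [← show ⇑a '' BZset = BZset from ha, ← Set.image_comp]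
    rw [show ⇑a⁻¹ ∘ ⇑a = id from funext fun x => a.symm_apply_apply x, Set.image_id]




def vA : Fin 8 → Fin 9 → ℤ := fun i k =>
  match i.val, k.val with
  | 0, 0 => 1 | 1, 1 => 1 | 2, 2 => 1
  | 3, 3 => 1 | 3, 6 => 1
  | 4, 4 => 1 | 4, 7 => 1
  | 5, 5 => 1 | 5, 8 => 1
  | 6, 3 => 1 | 6, 5 => 1 | 6, 7 => 1
  | 7, 4 => 1 | 7, 6 => 1 | 7, 8 => 1
  | _, _ => 0

lemma vA_mem (i : Fin 8) : vA i ∈ Lbz := by fin_cases i <;> exact ⟨by decide, by decide⟩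

def A (i : Fin 8) : Lbz := ⟨vA i, vA_mem i⟩

def coord : Fin 3 → Fin 2 → Fin 9 := ![![3,6],![7,4],![5,8]]
def cE : Fin 3 → Fin 9 := Fin.castLE (by omega)
def eE : Fin 3 → Fin 8 := Fin.castLE (by omega)
def eF : Fin 3 → Fin 8 := fun j => ⟨j.val + 3, by omega⟩
def eG : Fin 2 → Fin 8 := fun s => ⟨s.val + 6, by omega⟩

def ι : (Fin 3 ⊕ Fin 3 × Fin 2) ≃ Fin 9 where
  toFun := Sum.elim cE (fun p => coord p.1 p.2)
  invFun := ![.inl 0, .inl 1, .inl 2, .inr (0,0), .inr (1,1), .inr (2,0), .inr (0,1), .inr (1,0), .inr (2,1)]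
  left_inv := by decide
  right_inv := by decide

open Equiv in
abbrev G0 := Perm (Fin 3) × Perm (Fin 3) × Perm (Fin 2)

def ρh : G0 →* Equiv.Perm (Fin 9) where
  toFun g := ι.permCongr ((g.1).sumCongr ((g.2.1).prodCongr g.2.2))
  map_one' := by
    ext x
    simp [Equiv.permCongr_apply]
  map_mul' g h := by
    ext x
    simp [Equiv.permCongr_apply, Equiv.Perm.mul_apply]
    rfl

lemma ρ_cE (g : G0) (t : Fin 3) : ρh g (cE t) = cE (g.1 t) := by
  fin_cases t <;> rfl

lemma ρ_coord (g : G0) (a : Fin 3) (b : Fin 2) :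
    ρh g (coord a b) = coord (g.2.1 a) (g.2.2 b) := by
  fin_cases a <;> fin_cases b <;> rfl

lemma vE_cE : ∀ s t, vA (eE s) (cE t) = if s = t then 1 else 0 := by decide
lemma vE_coord : ∀ s a b, vA (eE s) (coord a b) = 0 := by decide
lemma vF_cE : ∀ j t, vA (eF j) (cE t) = 0 := by decide
lemma vF_coord : ∀ j a b, vA (eF j) (coord a b) = if a = j then 1 else 0 := by decide
lemma vG_cE : ∀ s t, vA (eG s) (cE t) = 0 := by decide
lemma vG_coord : ∀ s a b, vA (eG s) (coord a b) = if b = s then 1 else 0 := by decide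

lemma eps2 : ∀ ε : Equiv.Perm (Fin 2), (ε 0 = 0 ∧ ε 1 = 1) ∨ (ε 0 = 1 ∧ ε 1 = 0) := by decide

lemma Dconst (v : Fin 9 → ℤ) (hv : v ∈ Lbz) (ε : Equiv.Perm (Fin 2)) (a : Fin 3) :
    v (coord a (ε 0)) - v (coord a (ε 1)) = v (coord 0 (ε 0)) - v (coord 0 (ε 1)) := by
  obtain ⟨h1, h2⟩ := hv
  rcases eps2 ε with ⟨e0, e1⟩ | ⟨e0, e1⟩ <;> rw [e0, e1] <;> fin_cases a <;>
    simp only [coord] <;> norm_num [Matrix.cons_val_zero, Matrix.cons_val_one] <;> omega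

lemma Lmem (g : G0) (v : Fin 9 → ℤ) (hv : v ∈ Lbz) : (fun i => v (ρh g i)) ∈ Lbz := by
  show v (ρh g 3) - v (ρh g 6) = v (ρh g 7) - v (ρh g 4) ∧
       v (ρh g 7) - v (ρh g 4) = v (ρh g 5) - v (ρh g 8)
  rw [show (3 : Fin 9) = coord 0 0 from rfl, show (6 : Fin 9) = coord 0 1 from rfl,
      show (7 : Fin 9) = coord 1 0 from rfl, show (4 : Fin 9) = coord 1 1 from rfl,
      show (5 : Fin 9) = coord 2 0 from rfl, show (8 : Fin 9) = coord 2 1 from rfl]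
  simp only [ρ_coord]
  constructor
  · rw [Dconst v hv g.2.2 (g.2.1 0), Dconst v hv g.2.2 (g.2.1 1)]
  · rw [Dconst v hv g.2.2 (g.2.1 1), Dconst v hv g.2.2 (g.2.1 2)]

lemma ρ_inv_apply (g : G0) (i : Fin 9) : ρh g⁻¹ (ρh g i) = i := by
  rw [map_inv]; exact Equiv.symm_apply_apply _ _

def Φ (g : G0) : Lbz ≃ₗ[ℤ] Lbz where
  toFun v := ⟨fun i => v.1 (ρh g⁻¹ i), Lmem g⁻¹ v.1 v.2⟩
  invFun v := ⟨fun i => v.1 (ρh g i), Lmem g v.1 v.2⟩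
  map_add' u v := rfl
  map_smul' c v := rfl
  left_inv v := by
    apply Subtype.ext; funext i
    show v.1 (ρh g⁻¹ (ρh g i)) = v.1 i
    rw [ρ_inv_apply]
  right_inv v := by
    apply Subtype.ext; funext i
    show v.1 (ρh g (ρh g⁻¹ i)) = v.1 i
    rw [map_inv]; rw [Equiv.Perm.inv_def, Equiv.apply_symm_apply]

lemma Φ_coord (g : G0) (v : Lbz) (i : Fin 9) : (Φ g v).1 i = v.1 (ρh g⁻¹ i) := rfl

lemma Φ_mul (g h : G0) : Φ (g * h) = Φ g * Φ h := by
  apply LinearEquiv.toLinearMap_injective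
  apply LinearMap.ext
  intro v
  apply Subtype.ext; funext i
  show v.1 (ρh (g*h)⁻¹ i) = v.1 (ρh h⁻¹ (ρh g⁻¹ i))
  rw [mul_inv_rev, map_mul]
  rfl

lemma Φ_BZ_iff (g : G0) (v : Lbz) : Φ g v ∈ BZset ↔ v ∈ BZset := by
  constructor
  · intro h j
    have := h ((ρh g⁻¹).symm j)
    rwa [Φ_coord, Equiv.apply_symm_apply] at this
  · intro h i
    exact h _

lemma Φ_mem (g : G0) : Φ g ∈ GBZ := by
  show ⇑(Φ g) '' BZset = BZset
  ext w
  constructor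
  · rintro ⟨v, hv, rfl⟩
    exact (Φ_BZ_iff g v).mpr hv
  · intro hw
    refine ⟨(Φ g).symm w, ?_, (Φ g).apply_symm_apply w⟩
    have := (Φ_BZ_iff g ((Φ g).symm w))
    rw [(Φ g).apply_symm_apply w] at this
    exact this.mp hw

def Φbar : G0 →* GBZ :=
  MonoidHom.mk' (fun g => ⟨Φ g, Φ_mem g⟩) (fun g h => Subtype.ext (Φ_mul g h))

lemma ΦA_e (g : G0) (s : Fin 3) : Φ g (A (eE s)) = A (eE (g.1 s)) := by
  apply Subtype.ext; funext m
  obtain ⟨x, rfl⟩ := ι.surjective m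
  rcases x with t | ⟨a, b⟩
  · show vA (eE s) (ρh g⁻¹ (cE t)) = vA (eE (g.1 s)) (cE t)
    rw [ρ_cE, vE_cE, vE_cE]
    have : (s = g.1⁻¹ t) ↔ (g.1 s = t) := by
      constructor
      · rintro rfl; exact g.1.apply_symm_apply t
      · rintro rfl; exact (g.1.symm_apply_apply s).symm
    simp only [Equiv.Perm.inv_def] at this; simp [this]
  · show vA (eE s) (ρh g⁻¹ (coord a b)) = vA (eE (g.1 s)) (coord a b)
    rw [ρ_coord, vE_coord, vE_coord]

lemma ΦA_f (g : G0) (s : Fin 3) : Φ g (A (eF s)) = A (eF (g.2.1 s)) := by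
  apply Subtype.ext; funext m
  obtain ⟨x, rfl⟩ := ι.surjective m
  rcases x with t | ⟨a, b⟩
  · show vA (eF s) (ρh g⁻¹ (cE t)) = vA (eF (g.2.1 s)) (cE t)
    rw [ρ_cE, vF_cE, vF_cE]
  · show vA (eF s) (ρh g⁻¹ (coord a b)) = vA (eF (g.2.1 s)) (coord a b)
    rw [ρ_coord, vF_coord, vF_coord]
    have : (g.2.1⁻¹ a = s) ↔ (a = g.2.1 s) := by
      constructor
      · rintro rfl; exact (g.2.1.apply_symm_apply a).symm
      · rintro rfl; exact g.2.1.symm_apply_apply s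
    simp only [Equiv.Perm.inv_def] at this; simp [this]

lemma ΦA_g (g : G0) (s : Fin 2) : Φ g (A (eG s)) = A (eG (g.2.2 s)) := by
  apply Subtype.ext; funext m
  obtain ⟨x, rfl⟩ := ι.surjective m
  rcases x with t | ⟨a, b⟩
  · show vA (eG s) (ρh g⁻¹ (cE t)) = vA (eG (g.2.2 s)) (cE t)
    rw [ρ_cE, vG_cE, vG_cE]
  · show vA (eG s) (ρh g⁻¹ (coord a b)) = vA (eG (g.2.2 s)) (coord a b)
    rw [ρ_coord, vG_coord, vG_coord]
    have : (g.2.2⁻¹ b = s) ↔ (b = g.2.2 s) := by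
      constructor
      · rintro rfl; exact (g.2.2.apply_symm_apply b).symm
      · rintro rfl; exact g.2.2.symm_apply_apply s
    simp only [Equiv.Perm.inv_def] at this; simp [this]

lemma span7 (v : Lbz) :
    v = v.1 0 • A 0 + v.1 1 • A 1 + v.1 2 • A 2 + v.1 6 • A 3 + v.1 4 • A 4 +
        v.1 8 • A 5 + (v.1 3 - v.1 6) • A 6 := by
  obtain ⟨h1, h2⟩ := v.2
  apply Subtype.ext; funext k
  have hc : ∀ (i : Fin 8) (c : ℤ), ((c • A i : Lbz) : Fin 9 → ℤ) k = c * vA i k := fun _ _ => rfl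
  have ha : ∀ (x y : Lbz), ((x + y : Lbz) : Fin 9 → ℤ) k = (x : Fin 9 → ℤ) k + (y : Fin 9 → ℤ) k :=
    fun _ _ => rfl
  simp only [ha, hc]
  fin_cases k <;> simp [vA] <;> omega

lemma ext_on_A {θ θ' : Lbz ≃ₗ[ℤ] Lbz} (h : ∀ i : Fin 8, θ (A i) = θ' (A i)) : θ = θ' := by
  apply LinearEquiv.toLinearMap_injective
  apply LinearMap.ext
  intro v
  show θ v = θ' v
  conv_lhs => rw [span7 v]
  conv_rhs => rw [span7 v]
  simp only [map_add, map_smul, h]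

def IsAtomBZ (v : Lbz) : Prop :=
  v ∈ BZset ∧ v ≠ 0 ∧ ∀ a b : Lbz, a ∈ BZset → b ∈ BZset → v = a + b → a = 0 ∨ b = 0

lemma A_BZ (i : Fin 8) : A i ∈ BZset := by
  show ∀ k, 0 ≤ vA i k
  fin_cases i <;> decide

lemma vA_ne : ∀ i, vA i ≠ (0 : Fin 9 → ℤ) := by decide

lemma A_ne (i : Fin 8) : A i ≠ 0 :=
  fun h => vA_ne i (congrArg (fun x : Lbz => (x : Fin 9 → ℤ)) h)

lemma vA_inj : Function.Injective vA := by decide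

lemma A_inj : Function.Injective A := fun i j h =>
  vA_inj (congrArg (fun x : Lbz => (x : Fin 9 → ℤ)) h)

lemma A_min (i : Fin 8) (a b : Lbz) (ha : ∀ k, 0 ≤ a.1 k) (hb : ∀ k, 0 ≤ b.1 k)
    (h : (A i : Fin 9 → ℤ) = a.1 + b.1) : a = 0 ∨ b = 0 := by
  obtain ⟨ha1, ha2⟩ := a.2
  obtain ⟨hb1, hb2⟩ := b.2
  have hk : ∀ k, vA i k = a.1 k + b.1 k := fun k => congrFun h k
  have h0 := hk 0; have h1 := hk 1; have h2 := hk 2; have h3 := hk 3; have h4 := hk 4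
  have h5 := hk 5; have h6 := hk 6; have h7 := hk 7; have h8 := hk 8
  have ha0 := ha 0; have ha1' := ha 1; have ha2' := ha 2; have ha3 := ha 3; have ha4 := ha 4
  have ha5 := ha 5; have ha6 := ha 6; have ha7 := ha 7; have ha8 := ha 8
  have hb0 := hb 0; have hb1' := hb 1; have hb2' := hb 2; have hb3 := hb 3; have hb4 := hb 4
  have hb5 := hb 5; have hb6 := hb 6; have hb7 := hb 7; have hb8 := hb 8
  have key : (a.1 0 = 0 ∧ a.1 1 = 0 ∧ a.1 2 = 0 ∧ a.1 3 = 0 ∧ a.1 4 = 0 ∧ a.1 5 = 0 ∧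
        a.1 6 = 0 ∧ a.1 7 = 0 ∧ a.1 8 = 0) ∨
      (b.1 0 = 0 ∧ b.1 1 = 0 ∧ b.1 2 = 0 ∧ b.1 3 = 0 ∧ b.1 4 = 0 ∧ b.1 5 = 0 ∧
        b.1 6 = 0 ∧ b.1 7 = 0 ∧ b.1 8 = 0) := by
    fin_cases i <;> simp [vA] at h0 h1 h2 h3 h4 h5 h6 h7 h8 <;> omega
  rcases key with h' | h'
  · left; apply Subtype.ext; funext k; fin_cases k <;> simp <;> omega
  · right; apply Subtype.ext; funext k; fin_cases k <;> simp <;> omega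

lemma A_atom (i : Fin 8) : IsAtomBZ (A i) :=
  ⟨A_BZ i, A_ne i, fun a b ha hb h => A_min i a b ha hb (congrArg (fun x : Lbz => (x : Fin 9 → ℤ)) h)⟩

lemma atom_eq_A {v : Lbz} (hv : IsAtomBZ v) : ∃ i, v = A i := by
  obtain ⟨hBZ, hne, hmin⟩ := hv
  obtain ⟨c1, c2⟩ := v.2
  have hb : ∀ k, 0 ≤ v.1 k := hBZ
  have hb0 := hb 0; have hb1 := hb 1; have hb2 := hb 2; have hb3 := hb 3; have hb4 := hb 4
  have hb5 := hb 5; have hb6 := hb 6; have hb7 := hb 7; have hb8 := hb 8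
  have step : ∀ i : Fin 8, (∀ k, 0 ≤ v.1 k - vA i k) → v = A i := by
    intro i hnn
    have hsub : (v - A i : Lbz) ∈ BZset := fun k => hnn k
    have := hmin (A i) (v - A i) (A_BZ i) hsub (by abel)
    rcases this with h | h
    · exact absurd h (A_ne i)
    · exact sub_eq_zero.mp h
  rcases lt_trichotomy (v.1 3 - v.1 6) 0 with hlt | heq | hgt
  · exact ⟨7, step 7 (fun k => by fin_cases k <;> simp [vA] <;> omega)⟩
  · by_cases p3 : 0 < v.1 3
    · exact ⟨3, step 3 (fun k => by fin_cases k <;> simp [vA] <;> omega)⟩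
    · by_cases p4 : 0 < v.1 4
      · exact ⟨4, step 4 (fun k => by fin_cases k <;> simp [vA] <;> omega)⟩
      · by_cases p5 : 0 < v.1 5
        · exact ⟨5, step 5 (fun k => by fin_cases k <;> simp [vA] <;> omega)⟩
        · by_cases p0 : 0 < v.1 0
          · exact ⟨0, step 0 (fun k => by fin_cases k <;> simp [vA] <;> omega)⟩
          · by_cases p1 : 0 < v.1 1
            · exact ⟨1, step 1 (fun k => by fin_cases k <;> simp [vA] <;> omega)⟩
            · by_cases p2 : 0 < v.1 2
              · exact ⟨2, step 2 (fun k => by fin_cases k <;> simp [vA] <;> omega)⟩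
              · exfalso
                apply hne
                apply Subtype.ext; funext k
                fin_cases k <;> simp <;> omega
  · exact ⟨6, step 6 (fun k => by fin_cases k <;> simp [vA] <;> omega)⟩

lemma relA : A 3 + A 4 + A 5 = A 6 + A 7 := by
  apply Subtype.ext
  show vA 3 + vA 4 + vA 5 = vA 6 + vA 7
  decide

set_option maxRecDepth 40000 in
set_option maxHeartbeats 1600000 in
lemma key5 : ∀ a b c d e : Fin 8, a ≠ b → a ≠ c → b ≠ c → d ≠ e →
    (∀ k, vA a k + vA b k + vA c k = vA d k + vA e k) →
    ((3 ≤ a.val ∧ a.val < 6) ∧ (3 ≤ b.val ∧ b.val < 6) ∧ (3 ≤ c.val ∧ c.val < 6) ∧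
      6 ≤ d.val ∧ 6 ≤ e.val) := by decide

lemma cover3 : ∀ a b c x : Fin 8, 3 ≤ a.val → a.val < 6 → 3 ≤ b.val → b.val < 6 →
    3 ≤ c.val → c.val < 6 → a ≠ b → a ≠ c → b ≠ c → 3 ≤ x.val → x.val < 6 →
    x = a ∨ x = b ∨ x = c := by decide

lemma cover2 : ∀ d e x : Fin 8, 6 ≤ d.val → 6 ≤ e.val → d ≠ e → 6 ≤ x.val →
    x = d ∨ x = e := by decide

lemma GBZ_forward {θ : Lbz ≃ₗ[ℤ] Lbz} (hθ : θ ∈ GBZ) {v : Lbz} (hv : v ∈ BZset) :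
    θ v ∈ BZset := by
  have h : ⇑θ '' BZset = BZset := hθ
  rw [← h]; exact ⟨v, hv, rfl⟩

lemma GBZ_symm {θ : Lbz ≃ₗ[ℤ] Lbz} (hθ : θ ∈ GBZ) {w : Lbz} (hw : w ∈ BZset) :
    θ.symm w ∈ BZset := by
  have h : ⇑θ '' BZset = BZset := hθ
  rw [← h] at hw
  obtain ⟨v, hv, rfl⟩ := hw
  rwa [LinearEquiv.symm_apply_apply]

lemma atom_map {θ : Lbz ≃ₗ[ℤ] Lbz} (hθ : θ ∈ GBZ) {v : Lbz} (hv : IsAtomBZ v) :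
    IsAtomBZ (θ v) := by
  obtain ⟨h1, h2, h3⟩ := hv
  refine ⟨GBZ_forward hθ h1, ?_, ?_⟩
  · intro h
    exact h2 ((LinearEquiv.map_eq_zero_iff θ).mp h)
  · intro a b ha hb h
    have ha' := GBZ_symm hθ ha
    have hb' := GBZ_symm hθ hb
    have hv' : v = θ.symm a + θ.symm b := by
      have := congrArg θ.symm h
      rwa [LinearEquiv.symm_apply_apply, map_add] at this
    rcases h3 _ _ ha' hb' hv' with h' | h'
    · left
      have := congrArg θ h'
      rwa [LinearEquiv.apply_symm_apply, map_zero] at this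
    · right
      have := congrArg θ h'
      rwa [LinearEquiv.apply_symm_apply, map_zero] at this

lemma Φbar_inj : Function.Injective Φbar := by
  rw [injective_iff_map_eq_one]
  intro g hg
  have hg' : Φ g = 1 := congrArg Subtype.val hg
  have happ : ∀ v : Lbz, Φ g v = v := fun v => by rw [hg']; rfl
  have hσ : g.1 = 1 := by
    apply Equiv.ext
    intro s
    have h1 := happ (A (eE s))
    rw [ΦA_e] at h1
    have h2 := congrArg Fin.val (A_inj h1)
    simp only [eE, Fin.coe_castLE] at h2
    exact Fin.ext h2
  have hτ : g.2.1 = 1 := by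
    apply Equiv.ext
    intro s
    have h1 := happ (A (eF s))
    rw [ΦA_f] at h1
    have h2 := congrArg Fin.val (A_inj h1)
    simp only [eF] at h2
    show g.2.1 s = s
    exact Fin.ext (by omega)
  have hε : g.2.2 = 1 := by
    apply Equiv.ext
    intro s
    have h1 := happ (A (eG s))
    rw [ΦA_g] at h1
    have h2 := congrArg Fin.val (A_inj h1)
    simp only [eG] at h2
    show g.2.2 s = s
    exact Fin.ext (by omega)
  exact Prod.ext hσ (Prod.ext hτ hε)

lemma Φbar_surj : Function.Surjective Φbar := by
  rintro ⟨θ, hθ⟩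
  have hAtom : ∀ i, ∃ j, θ (A i) = A j := fun i => by
    have := atom_map hθ (A_atom i)
    obtain ⟨j, hj⟩ := atom_eq_A this
    exact ⟨j, hj⟩
  choose p hp using hAtom
  have pinj : Function.Injective p := by
    intro i j h
    have : θ (A i) = θ (A j) := by rw [hp i, hp j, h]
    exact A_inj (θ.injective this)
  have hrel : A (p 3) + A (p 4) + A (p 5) = A (p 6) + A (p 7) := by
    rw [← hp 3, ← hp 4, ← hp 5, ← hp 6, ← hp 7, ← map_add, ← map_add, ← map_add, relA]
  have hco : ∀ k, vA (p 3) k + vA (p 4) k + vA (p 5) k = vA (p 6) k + vA (p 7) k :=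
    fun k => congrFun (congrArg Subtype.val hrel) k
  have hkey := key5 (p 3) (p 4) (p 5) (p 6) (p 7)
    (fun h => absurd (pinj h) (by decide)) (fun h => absurd (pinj h) (by decide))
    (fun h => absurd (pinj h) (by decide)) (fun h => absurd (pinj h) (by decide)) hco
  obtain ⟨⟨h3a, h3b⟩, ⟨h4a, h4b⟩, ⟨h5a, h5b⟩, h6a, h7a⟩ := hkey
  have hFb : ∀ j : Fin 3, 3 ≤ (p (eF j)).val ∧ (p (eF j)).val < 6 := by
    intro j
    fin_cases j
    · exact ⟨h3a, h3b⟩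
    · exact ⟨h4a, h4b⟩
    · exact ⟨h5a, h5b⟩
  have hGb : ∀ s : Fin 2, 6 ≤ (p (eG s)).val := by
    intro s
    fin_cases s
    · exact h6a
    · exact h7a
  have hEb : ∀ j : Fin 3, (p (eE j)).val < 3 := by
    intro j
    by_contra hcon
    push_neg at hcon
    rcases Nat.lt_or_ge (p (eE j)).val 6 with hlt | hge
    · rcases cover3 (p 3) (p 4) (p 5) (p (eE j)) h3a h3b h4a h4b h5a h5b
        (fun h => absurd (pinj h) (by decide)) (fun h => absurd (pinj h) (by decide))
        (fun h => absurd (pinj h) (by decide)) hcon hlt with h | h | h <;>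
      · have := pinj h
        revert this
        fin_cases j <;> decide
    · rcases cover2 (p 6) (p 7) (p (eE j)) h6a h7a
        (fun h => absurd (pinj h) (by decide)) hge with h | h <;>
      · have := pinj h
        revert this
        fin_cases j <;> decide
  let σf : Fin 3 → Fin 3 := fun j => ⟨(p (eE j)).val, hEb j⟩
  have σinj : Function.Injective σf := by
    intro i j h
    have hv := congrArg Fin.val h
    simp only [σf] at hv
    have h2 := pinj (Fin.ext hv)
    have h3 := congrArg Fin.val h2
    simp only [eE, Fin.coe_castLE] at h3
    exact Fin.ext h3
  let τf : Fin 3 → Fin 3 := fun j => ⟨(p (eF j)).val - 3, by have := (hFb j).2; omega⟩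
  have τinj : Function.Injective τf := by
    intro i j h
    have hv := congrArg Fin.val h
    simp only [τf] at hv
    have h1 := (hFb i).1
    have h2 := (hFb j).1
    have h3 := pinj (Fin.ext (show (p (eF i)).val = (p (eF j)).val by omega))
    have h4 := congrArg Fin.val h3
    simp only [eF] at h4
    exact Fin.ext (by omega)
  let εf : Fin 2 → Fin 2 := fun s => ⟨(p (eG s)).val - 6, by have := (p (eG s)).isLt; have := hGb s; omega⟩
  have εinj : Function.Injective εf := by
    intro i j h
    have hv := congrArg Fin.val h
    simp only [εf] at hv
    have h1 := hGb i
    have h2 := hGb j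
    have h3 := pinj (Fin.ext (show (p (eG i)).val = (p (eG j)).val by omega))
    have h4 := congrArg Fin.val h3
    simp only [eG] at h4
    exact Fin.ext (by omega)
  let g : G0 := (Equiv.ofBijective σf (Finite.injective_iff_bijective.mp σinj),
                 Equiv.ofBijective τf (Finite.injective_iff_bijective.mp τinj),
                 Equiv.ofBijective εf (Finite.injective_iff_bijective.mp εinj))
  have hA_e : ∀ s : Fin 3, eE (σf s) = p (eE s) := by
    intro s
    apply Fin.ext
    show (σf s).val = (p (eE s)).val
    rfl
  have hA_f : ∀ s : Fin 3, eF (τf s) = p (eF s) := by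
    intro s
    have h1 := (hFb s).1
    apply Fin.ext
    show (τf s).val + 3 = (p (eF s)).val
    show (p (eF s)).val - 3 + 3 = (p (eF s)).val
    omega
  have hA_g : ∀ s : Fin 2, eG (εf s) = p (eG s) := by
    intro s
    have h1 := hGb s
    apply Fin.ext
    show (εf s).val + 6 = (p (eG s)).val
    show (p (eG s)).val - 6 + 6 = (p (eG s)).val
    omega
  refine ⟨g, ?_⟩
  apply Subtype.ext
  show Φ g = θ
  apply ext_on_A
  intro i
  fin_cases i
  · show Φ g (A (eE 0)) = θ (A (eE 0))
    rw [ΦA_e, hp]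
    exact congrArg A (hA_e 0)
  · show Φ g (A (eE 1)) = θ (A (eE 1))
    rw [ΦA_e, hp]
    exact congrArg A (hA_e 1)
  · show Φ g (A (eE 2)) = θ (A (eE 2))
    rw [ΦA_e, hp]
    exact congrArg A (hA_e 2)
  · show Φ g (A (eF 0)) = θ (A (eF 0))
    rw [ΦA_f, hp]
    exact congrArg A (hA_f 0)
  · show Φ g (A (eF 1)) = θ (A (eF 1))
    rw [ΦA_f, hp]
    exact congrArg A (hA_f 1)
  · show Φ g (A (eF 2)) = θ (A (eF 2))
    rw [ΦA_f, hp]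
    exact congrArg A (hA_f 2)
  · show Φ g (A (eG 0)) = θ (A (eG 0))
    rw [ΦA_g, hp]
    exact congrArg A (hA_g 0)
  · show Φ g (A (eG 1)) = θ (A (eG 1))
    rw [ΦA_g, hp]
    exact congrArg A (hA_g 1)

theorem stmt8 :
    Nat.card GBZ = 72 ∧
      Nonempty (GBZ ≃* Equiv.Perm (Fin 3) × Equiv.Perm (Fin 3) × Equiv.Perm (Fin 2)) := by
  have bij : Function.Bijective Φbar := ⟨Φbar_inj, Φbar_surj⟩
  let e := MulEquiv.ofBijective Φbar bij
  constructor
  · have h1 : Nat.card GBZ = Nat.card G0 := Nat.card_congr e.toEquiv.symm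
    rw [h1]
    simp only [Nat.card_eq_fintype_card, Fintype.card_prod, Fintype.card_perm, Fintype.card_fin]
    decide
  · exact ⟨e.symm⟩
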